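/- Let G be a finite simple graph with injective neighborhood map, let v be a vertex of G, and let c be a new vertex not in G. The graph G' obtained from G by adding c and the single edge {v,c} has an injective neighborhood map if and only if no vertex of G has open neighborhood equal to {v}. -/
import Mathlib


theorem stmt_15 {V : Type*}
    (G : SimpleGraph V) (hG : Function.Injective G.neighborSet)
    (v : V)
    (G' : SimpleGraph (Option V))
    (hss : ∀ a b : V, G'.Adj (some a) (some b) ↔ G.Adj a b)
    (hsn : ∀ a : V, G'.Adj (some a) none ↔ a = v) :
    Function.Injective G'.neighborSet ↔ ¬ ∃ w : V, G.neighborSet w = {v} := by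
  have hnone : ∀ u : V, G'.Adj none (some u) ↔ u = v := by
    intro u
    rw [SimpleGraph.adj_comm]
    exact hsn u
  constructor
  · rintro hinj ⟨w, hw⟩
    have hwv : w ≠ v := by
      intro h
      rw [h] at hw
      have : v ∈ G.neighborSet v := by rw [hw]; rfl
      exact G.irrefl this
    have h1 : G'.neighborSet (some w) = G'.neighborSet none := by
      ext x
      cases x with
      | none =>
        simp only [SimpleGraph.mem_neighborSet, hsn]
        constructor
        · intro h; exact absurd h hwv
        · intro h; exact absurd h (G'.irrefl)
      | some u =>
        simp only [SimpleGraph.mem_neighborSet, hss, hnone]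
        constructor
        · intro h
          have : u ∈ G.neighborSet w := h
          rw [hw] at this; exact this
        · intro h; rw [h]
          have : v ∈ G.neighborSet w := by rw [hw]; rfl
          exact this
    exact Option.some_ne_none w (hinj h1)
  · intro h
    have key : ∀ b : V, G'.neighborSet (some b) = G'.neighborSet none → False := by
      intro b hb
      apply h
      refine ⟨b, ?_⟩
      ext u
      have hu := Set.ext_iff.mp hb (some u)
      simp only [SimpleGraph.mem_neighborSet, hss, hnone] at hu
      simpa [SimpleGraph.mem_neighborSet, Set.mem_singleton_iff] using hu
    intro x y hxy
    match x, y with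
    | none, none => rfl
    | some a, none => exact absurd hxy (fun h => key a h)
    | none, some b => exact absurd hxy.symm (fun h => key b h)
    | some a, some b =>
      have : G.neighborSet a = G.neighborSet b := by
        ext u
        have hu := Set.ext_iff.mp hxy (some u)
        simpa [SimpleGraph.mem_neighborSet, hss] using hu
      rw [hG this]
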